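/- arXiv:math/0108008 — 3 statements merged into one kernel-verified Lean document; each statement's English description precedes it below -/
import Mathlib

section
/- For t > 0 and n ∈ ℕ, the trace of the operator K_n (with kernel built from φ(z) = exp(t(z + 1/z)) as in the paper) satisfies tr K_n = ∑_{k=1}^∞ k · J_{n+k}(2t)², where J_m denotes the Bessel function of the first kind of order m. -/
open Complex

/-- Bessel function of the first kind of integer order `k`. -/
noncomputable def besselJ (k : ℤ) (x : ℝ) : ℝ :=
  Real.pi⁻¹ * ∫ θ in (0 : ℝ)..Real.pi, Real.cos (k * θ - x * Real.sin θ)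

/-- The `k`-th Laurent (Fourier) coefficient of `f` on the unit circle. -/
noncomputable def laurentCoeff (f : ℂ → ℂ) (k : ℤ) : ℂ :=
  (2 * (Real.pi : ℂ))⁻¹ *
    ∫ θ in (0 : ℝ)..(2 * Real.pi), f (Complex.exp (I * θ)) * Complex.exp (-I * k * θ)

/-!
With `φ₊ = e^{tz}`, `φ₋ = e^{t/z}` one has `φ₋/φ₊ = exp (t (z⁻¹ - z))` and
`φ₊/φ₋ = exp (t (z - z⁻¹))`, whose Laurent coefficients are Bessel coefficients:
`(φ₊/φ₋)_k = J_k(2t)` and `(φ₋/φ₊)_k = J_{-k}(2t) = (-1)^k J_k(2t)`. Hence the `k`-th term of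
`K(i, i)` is `J_{i+k+1}(2t)²`, and the trace is `∑_{i ≥ n} ∑_{k ≥ 0} J_{i+k+1}(2t)²`; regrouping by
`m = i + k` counts each `J_{n+m+1}(2t)²` exactly `m + 1` times. The regrouping is legitimate
because the terms are nonnegative and, by the recurrence `J_{k-1} + J_{k+1} = (2k/x) J_k` together
with `|J_k| ≤ 1`, `J_k(x) = O(k⁻²)`.
-/

open scoped Real

lemma besselJ_apply_neg (k : ℤ) (x : ℝ) : besselJ k (-x) = besselJ (-k) x := by
  simp only [besselJ]
  congr 1
  refine intervalIntegral.integral_congr fun θ _ => ?_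
  rw [← Real.cos_neg]
  push_cast
  ring_nf

lemma besselJ_neg (k : ℤ) (x : ℝ) : besselJ (-k) x = (-1) ^ k * besselJ k x := by
  have hreflect : ∀ θ : ℝ, Real.cos ((-k : ℤ) * θ - x * Real.sin θ) =
      (-1) ^ k * Real.cos (k * (π - θ) - x * Real.sin (π - θ)) := by
    intro θ
    rw [Real.sin_pi_sub, ← Real.cos_int_mul_pi_sub, ← Real.cos_neg]
    push_cast
    ring_nf
  simp only [besselJ, intervalIntegral.integral_congr fun θ _ => hreflect θ,
    intervalIntegral.integral_const_mul,
    intervalIntegral.integral_comp_sub_left (fun θ => Real.cos (k * θ - x * Real.sin θ)) π,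
    sub_self, sub_zero]
  ring

lemma sq_besselJ_neg (k : ℤ) (x : ℝ) : besselJ (-k) x ^ 2 = besselJ k x ^ 2 := by
  have hsign : ((-1 : ℝ) ^ k) ^ 2 = 1 := by
    rw [← zpow_natCast, ← zpow_mul, mul_comm, zpow_mul]
    norm_num
  rw [besselJ_neg, mul_pow, hsign, one_mul]

lemma abs_besselJ_le_one (k : ℤ) (x : ℝ) : |besselJ k x| ≤ 1 := by
  have h := intervalIntegral.norm_integral_le_of_norm_le_const (a := 0) (b := π) (C := 1)
    (f := fun θ => Real.cos (k * θ - x * Real.sin θ)) fun θ _ => Real.abs_cos_le_one _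
  rw [Real.norm_eq_abs, sub_zero, abs_of_pos Real.pi_pos, one_mul] at h
  rw [besselJ, abs_mul, abs_inv, abs_of_pos Real.pi_pos, inv_mul_le_iff₀ Real.pi_pos, mul_one]
  exact h

lemma besselJ_sub_one_add_besselJ_add_one (k : ℤ) (x : ℝ) :
    x * (besselJ (k - 1) x + besselJ (k + 1) x) = 2 * k * besselJ k x := by
  let c : ℤ → ℝ → ℝ := fun m θ => Real.cos (m * θ - x * Real.sin θ)
  have hc : ∀ m, IntervalIntegrable (c m) MeasureTheory.volume 0 π :=
    fun m => (by fun_prop : Continuous (c m)).intervalIntegrable _ _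
  have hderiv : ∀ θ ∈ Set.uIcc 0 π, HasDerivAt (fun θ => Real.sin (k * θ - x * Real.sin θ))
      (k * c k θ - x / 2 * c (k - 1) θ - x / 2 * c (k + 1) θ) θ := by
    intro θ _
    refine ((((hasDerivAt_id θ).const_mul (k : ℝ)).sub
      ((Real.hasDerivAt_sin θ).const_mul x)).sin).congr_deriv ?_
    have hsub : ((k - 1 : ℤ) : ℝ) * θ - x * Real.sin θ = (k * θ - x * Real.sin θ) - θ := by
      push_cast; ring
    have hadd : ((k + 1 : ℤ) : ℝ) * θ - x * Real.sin θ = (k * θ - x * Real.sin θ) + θ := by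
      push_cast; ring
    simp only [c, hsub, hadd, Pi.sub_apply, id, mul_one]
    rw [Real.cos_sub _ θ, Real.cos_add _ θ]
    ring
  have hftc := intervalIntegral.integral_eq_sub_of_hasDerivAt hderiv
    ((((hc k).const_mul _).sub ((hc _).const_mul _)).sub ((hc _).const_mul _))
  rw [intervalIntegral.integral_sub (((hc k).const_mul _).sub ((hc _).const_mul _))
      ((hc _).const_mul _), intervalIntegral.integral_sub ((hc k).const_mul _) ((hc _).const_mul _),
    intervalIntegral.integral_const_mul, intervalIntegral.integral_const_mul,
    intervalIntegral.integral_const_mul] at hftc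
  simp only [Real.sin_int_mul_pi, Real.sin_pi, Real.sin_zero, mul_zero, sub_zero] at hftc
  simp only [besselJ]
  linear_combination (-2 * π⁻¹) * hftc

lemma two_mul_abs_mul_abs_besselJ_le (k : ℤ) (x : ℝ) :
    2 * |(k : ℝ)| * |besselJ k x| ≤ |x| * (|besselJ (k - 1) x| + |besselJ (k + 1) x|) := by
  have h := congrArg abs (besselJ_sub_one_add_besselJ_add_one k x)
  rw [abs_mul, abs_mul, abs_mul, abs_two] at h
  rw [← h]
  exact mul_le_mul_of_nonneg_left (abs_add_le _ _) (abs_nonneg x)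

lemma abs_mul_abs_besselJ_le (k : ℤ) (x : ℝ) : |(k : ℝ)| * |besselJ k x| ≤ |x| := by
  have h := two_mul_abs_mul_abs_besselJ_le k x
  nlinarith [abs_besselJ_le_one (k - 1) x, abs_besselJ_le_one (k + 1) x, abs_nonneg x]

lemma sub_one_mul_mul_abs_besselJ_le (k : ℤ) (hk : 0 ≤ k) (x : ℝ) :
    (k - 1) * k * |besselJ k x| ≤ x ^ 2 := by
  rcases hk.eq_or_lt with rfl | hpos
  · simpa using sq_nonneg x
  have hk1 : (1 : ℝ) ≤ k := by exact_mod_cast hpos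
  have h := two_mul_abs_mul_abs_besselJ_le k x
  have hsub := abs_mul_abs_besselJ_le (k - 1) x
  have hadd := abs_mul_abs_besselJ_le (k + 1) x
  push_cast at hsub hadd
  rw [abs_of_nonneg (by linarith : (0 : ℝ) ≤ k)] at h
  rw [abs_of_nonneg (by linarith : (0 : ℝ) ≤ k - 1)] at hsub
  rw [abs_of_nonneg (by linarith : (0 : ℝ) ≤ k + 1)] at hadd
  have hx2 : |x| * |x| = x ^ 2 := by rw [← abs_mul, ← sq, abs_sq]
  nlinarith [mul_le_mul_of_nonneg_left h (by linarith : (0 : ℝ) ≤ k - 1), abs_nonneg x,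
    abs_nonneg (besselJ (k + 1) x)]

lemma summable_mul_sq_besselJ (x : ℝ) : Summable fun k : ℕ => (k : ℝ) * besselJ k x ^ 2 := by
  refine ((Real.summable_one_div_nat_pow.mpr (by norm_num : 1 < 3)).mul_left (4 * x ^ 4))
    |>.of_norm_bounded_eventually_nat ?_
  filter_upwards [Filter.eventually_ge_atTop 2] with k hk
  have hk2 : (2 : ℝ) ≤ k := by exact_mod_cast hk
  have hdecay := sub_one_mul_mul_abs_besselJ_le k (Int.natCast_nonneg k) x
  push_cast at hdecay
  have hsq : ((k : ℝ) ^ 2 * |besselJ k x|) ^ 2 ≤ (2 * x ^ 2) ^ 2 :=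
    pow_le_pow_left₀ (by positivity) (by nlinarith [abs_nonneg (besselJ k x)]) 2
  rw [Real.norm_eq_abs, abs_of_nonneg (by positivity), mul_one_div, le_div_iff₀ (by positivity)]
  calc (k : ℝ) * besselJ k x ^ 2 * k ^ 3 = ((k : ℝ) ^ 2 * |besselJ k x|) ^ 2 := by
        rw [mul_pow, sq_abs]; ring
    _ ≤ 4 * x ^ 4 := by linarith

lemma summable_succ_mul_sq_besselJ_add (n : ℕ) (x : ℝ) :
    Summable fun m : ℕ => ((m : ℝ) + 1) * besselJ (n + m + 1) x ^ 2 := by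
  refine .of_nonneg_of_le (fun _ => by positivity) (fun m => ?_)
    ((summable_nat_add_iff (n + 1)).mpr (summable_mul_sq_besselJ x))
  have hindex : ((m + (n + 1) : ℕ) : ℤ) = n + m + 1 := by push_cast; ring
  rw [hindex]
  gcongr
  push_cast
  linarith [(n.cast_nonneg : (0 : ℝ) ≤ n)]

lemma exp_mul_exp_I_sub_inv_mul_exp (t : ℝ) (k : ℤ) (θ : ℝ) :
    exp (t * (exp (I * θ) - (exp (I * θ))⁻¹)) * exp (-I * k * θ) =
      exp ((2 * t * Real.sin θ - k * θ : ℝ) * I) := by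
  rw [← exp_neg, ← exp_add]
  congr 1
  have h := two_sin (θ : ℂ)
  rw [mul_comm I, ← neg_mul]
  push_cast
  linear_combination -(t * I) * h + t * (exp (θ * I) - exp (-θ * I)) * I_sq

lemma exp_mul_I_add_exp_mul_I_two_pi_sub (t : ℝ) (k : ℤ) (θ : ℝ) :
    exp ((2 * t * Real.sin θ - k * θ : ℝ) * I) +
        exp ((2 * t * Real.sin (2 * π - θ) - k * (2 * π - θ) : ℝ) * I) =
      ((2 * Real.cos (k * θ - 2 * t * Real.sin θ) : ℝ) : ℂ) := by
  have hφ : ((2 * t * Real.sin (2 * π - θ) - k * (2 * π - θ) : ℝ) : ℂ) * I =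
      -((2 * t * Real.sin θ - k * θ : ℝ) * I) + (-k : ℤ) * (2 * π * I) := by
    rw [Real.sin_two_pi_sub]; push_cast; ring
  rw [hφ, exp_add, exp_int_mul_two_pi_mul_I, mul_one, ← Real.cos_neg]
  push_cast
  rw [two_cos]
  ring_nf

lemma laurentCoeff_exp_mul_sub_inv (t : ℝ) (k : ℤ) :
    laurentCoeff (fun z => exp (t * (z - z⁻¹))) k = besselJ k (2 * t) := by
  set g : ℝ → ℂ := fun θ => exp ((2 * t * Real.sin θ - k * θ : ℝ) * I)
  have hgc : Continuous g := by fun_prop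
  have hgc' : Continuous fun θ => g (2 * π - θ) := by fun_prop
  -- `θ ↦ 2π - θ` conjugates `g`, so the integral over `[0, 2π]` is twice a real one over `[0, π]`.
  have hreflect : ∫ θ in π..2 * π, g θ = ∫ θ in (0 : ℝ)..π, g (2 * π - θ) := by
    rw [intervalIntegral.integral_comp_sub_left g (2 * π)]
    norm_num [two_mul]
  have hfold : ∫ θ in (0 : ℝ)..2 * π, g θ =
      ∫ θ in (0 : ℝ)..π, ((2 * Real.cos (k * θ - 2 * t * Real.sin θ) : ℝ) : ℂ) := by
    rw [← intervalIntegral.integral_add_adjacent_intervals (b := π)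
        (hgc.intervalIntegrable _ _) (hgc.intervalIntegrable _ _), hreflect,
      ← intervalIntegral.integral_add (hgc.intervalIntegrable _ _) (hgc'.intervalIntegrable _ _)]
    exact intervalIntegral.integral_congr fun θ _ => exp_mul_I_add_exp_mul_I_two_pi_sub t k θ
  simp only [laurentCoeff, besselJ, exp_mul_exp_I_sub_inv_mul_exp]
  rw [hfold, intervalIntegral.integral_ofReal, intervalIntegral.integral_const_mul]
  push_cast
  field_simp

lemma laurentCoeff_mul_laurentCoeff_neg (t : ℝ) (m : ℤ) :
    laurentCoeff (fun z => exp (t * (z⁻¹ - z))) m *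
        laurentCoeff (fun z => exp (t * (z - z⁻¹))) (-m) = (besselJ m (2 * t) ^ 2 : ℝ) := by
  have hflip : (fun z : ℂ => exp (t * (z⁻¹ - z))) = fun z => exp ((-t : ℝ) * (z - z⁻¹)) := by
    funext z
    push_cast
    ring_nf
  rw [hflip, laurentCoeff_exp_mul_sub_inv, laurentCoeff_exp_mul_sub_inv, mul_neg,
    besselJ_apply_neg, ← ofReal_mul, ← sq, sq_besselJ_neg]

open Finset in
lemma tsum_tsum_add_eq_tsum_succ_mul {a : ℕ → ℝ} (ha : ∀ m, 0 ≤ a m)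
    (hsum : Summable fun m : ℕ => ((m : ℝ) + 1) * a m) :
    ∑' (i : ℕ) (k : ℕ), a (i + k) = ∑' m : ℕ, ((m : ℝ) + 1) * a m := by
  let F : ℕ × ℕ → ℝ := fun p => a (p.1 + p.2)
  have hfiber : ∀ m : ℕ, ∑' p : antidiagonal m, F p = ((m : ℝ) + 1) * a m := by
    intro m
    rw [Finset.tsum_subtype (antidiagonal m) F,
      sum_congr rfl fun p hp => congrArg a (mem_antidiagonal.mp hp), sum_const,
      Nat.card_antidiagonal, nsmul_eq_mul]
    push_cast
    ring
  have hfin : ∀ m : ℕ, Summable fun p : antidiagonal m => F p :=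
    fun m => (hasSum_fintype _).summable
  have hσ : Summable fun x : Σ m : ℕ, antidiagonal m => F (x.2 : ℕ × ℕ) :=
    (summable_sigma_of_nonneg fun _ => ha _).mpr ⟨hfin, hsum.congr fun m => (hfiber m).symm⟩
  have hF : Summable F := HasAntidiagonal.sigmaAntidiagonalEquivProd.summable_iff.mp hσ
  calc ∑' (i : ℕ) (k : ℕ), a (i + k) = ∑' p, F p := (hF.tsum_prod' hF.prod_factor).symm
    _ = ∑' x : Σ m : ℕ, antidiagonal m, F (x.2 : ℕ × ℕ) :=
      (HasAntidiagonal.sigmaAntidiagonalEquivProd.tsum_eq F).symm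
    _ = ∑' m, ∑' p : antidiagonal m, F p := hσ.tsum_sigma' hfin
    _ = ∑' m : ℕ, ((m : ℝ) + 1) * a m := tsum_congr hfiber

theorem stmt_9_general (t : ℝ) (n : ℕ)
    (K : ℤ → ℤ → ℂ)
    (hK : ∀ i j : ℤ, K i j =
      ∑' (k : ℕ), laurentCoeff (fun z => Complex.exp (t * (z⁻¹ - z))) (i + (k + 1)) *
        laurentCoeff (fun z => Complex.exp (t * (z - z⁻¹))) (-(k + 1) - j)) :
    ∑' (i : ℕ), K (n + i) (n + i) =
      ∑' (k : ℕ), (((k : ℝ) + 1) * besselJ (n + k + 1) (2 * t) ^ 2 : ℝ) := by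
  have hdiag : ∀ i : ℕ, K (n + i) (n + i) =
      ((∑' k : ℕ, besselJ (n + (i + k : ℕ) + 1) (2 * t) ^ 2 : ℝ) : ℂ) := by
    intro i
    rw [hK, ofReal_tsum]
    refine tsum_congr fun k => ?_
    rw [show -((k : ℤ) + 1) - (n + i) = -((n + i : ℤ) + (k + 1)) by ring,
      laurentCoeff_mul_laurentCoeff_neg]
    push_cast
    ring_nf
  rw [tsum_congr hdiag, ← ofReal_tsum,
    tsum_tsum_add_eq_tsum_succ_mul (a := fun m => besselJ (n + m + 1) (2 * t) ^ 2)
      (fun _ => sq_nonneg _) (summable_succ_mul_sq_besselJ_add n (2 * t))]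

/-- Trace formula for the operator `K_n` built from `φ(z) = exp (t (z + 1/z))`,
with Wiener–Hopf factors `φ₊(z) = e^{tz}`, `φ₋(z) = e^{t/z}`:
`tr K_n = ∑_{k≥1} k J_{n+k}(2t)²`, where the kernel is
`K(i,j) = ∑_{k≥1} (φ₋/φ₊)_{i+k} (φ₊/φ₋)_{-k-j}` and the trace is the diagonal
sum over `i ≥ n`. -/
theorem stmt_9 (t : ℝ) (ht : 0 < t) (n : ℕ)
    (K : ℤ → ℤ → ℂ)
    (hK : ∀ i j : ℤ, K i j =
      ∑' (k : ℕ), laurentCoeff (fun z => Complex.exp (t * (z⁻¹ - z))) (i + (k + 1)) *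
        laurentCoeff (fun z => Complex.exp (t * (z - z⁻¹))) (-(k + 1) - j)) :
    ∑' (i : ℕ), K (n + i) (n + i) =
      ∑' (k : ℕ), (((k : ℝ) + 1) * besselJ (n + k + 1) (2 * t) ^ 2 : ℝ) :=
  stmt_9_general t n K hK
end

section
/- Under the hypotheses of the previous contour formula, the trace of the operator on ℓ²({h, h+1, ...}) with matrix entries A(i,j) = ∑_{k=1}^∞ f_{i+k} g_{-k-j} equals -(1/4π²) ∮∮ f(z₁) g(z₂) z₁^{-h} z₂^{h} / (z₁ - z₂)² dz₁ dz₂, where |z₂| < |z₁|. -/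
/-!
For `|z₂| < |z₁|` expand `(z₁ - z₂)⁻² = ∑_{i,k ≥ 0} z₂^(i+k) z₁^(-(i+k)-2)` and integrate term by
term, first in `z₂`, then in `z₁`; this is legitimate because the Laurent series of `f` and `g`
converge absolutely on their circles. On a circle each term picks out a single Laurent coefficient,
`∮ f(z) z^n dz = 2πi f_{-1-n}`, so the term `(i, k)` contributes
`(2πi)² f_{h+i+k+1} g_{-1-h-i-k}`, which is the `k`-th summand of the diagonal entry `A(h+i, h+i)`.
-/

open Complex Metric Real

structure HasLaurentSeriesOnCircle (f : ℂ → ℂ) (c : ℤ → ℂ) (R : ℝ) : Prop where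
  summable_norm : Summable fun m : ℤ => ‖c m‖ * R ^ m
  eq_tsum : ∀ z : ℂ, ‖z‖ = R → f z = ∑' m : ℤ, c m * z ^ m

theorem ne_zero_of_mem_sphere_zero {R : ℝ} (hR : 0 < R) {z : ℂ} (hz : z ∈ sphere (0 : ℂ) R) :
    z ≠ 0 :=
  ne_zero_of_mem_sphere hR.ne' ⟨z, hz⟩

theorem norm_zpow_of_mem_sphere_zero {R : ℝ} {z : ℂ} (hz : z ∈ sphere (0 : ℂ) R) (n : ℤ) :
    ‖z ^ n‖ = R ^ n := by
  rw [norm_zpow, mem_sphere_zero_iff_norm.mp hz]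

theorem continuousOn_zpow_sphere_zero {R : ℝ} (hR : 0 < R) (n : ℤ) :
    ContinuousOn (fun z : ℂ => z ^ n) (sphere 0 R) := fun z hz =>
  (continuousAt_zpow₀ z n (Or.inl (ne_zero_of_mem_sphere_zero hR hz))).continuousWithinAt

theorem intervalIntegral_eq_circleIntegral (F : ℂ → ℂ) (R : ℝ) :
    ∫ θ in (0 : ℝ)..2 * π, F (R * exp (I * θ)) * (I * (R * exp (I * θ))) =
      ∮ z in C(0, R), F z := by
  simp only [circleIntegral, deriv_circleMap, circleMap, zero_add, smul_eq_mul]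
  congr 1 with θ
  rw [mul_comm (θ : ℂ) I]
  ring

theorem intervalIntegral_eq_circleIntegral₂ (G : ℂ → ℂ → ℂ) (R₁ R₂ : ℝ) :
    ∫ θ₁ in (0 : ℝ)..2 * π, ∫ θ₂ in (0 : ℝ)..2 * π,
      G (R₁ * exp (I * θ₁)) (R₂ * exp (I * θ₂)) * (I * (R₁ * exp (I * θ₁))) *
        (I * (R₂ * exp (I * θ₂))) =
      ∮ z₁ in C(0, R₁), ∮ z₂ in C(0, R₂), G z₁ z₂ := by
  rw [← intervalIntegral_eq_circleIntegral]
  congr 1 with θ₁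
  rw [← intervalIntegral_eq_circleIntegral, ← intervalIntegral.integral_mul_const]
  congr 1 with θ₂
  ring

theorem circleIntegral_zpow {R : ℝ} (hR : R ≠ 0) (n : ℤ) :
    ∮ z in C(0, R), z ^ n = if n = -1 then 2 * π * I else 0 := by
  split_ifs with hn
  · simpa [hn] using circleIntegral.integral_sub_center_inv 0 hR
  · simpa using circleIntegral.integral_sub_zpow_of_ne hn 0 0 R

theorem circleIntegral_mul_zpow_mul_zpow (φ : ℂ → ℂ) {R : ℝ} (hR : 0 < R) (m n : ℤ) :
    ∮ z in C(0, R), φ z * z ^ m * z ^ n = ∮ z in C(0, R), φ z * z ^ (m + n) :=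
  circleIntegral.integral_congr hR.le fun z hz => by
    simp only [zpow_add₀ (ne_zero_of_mem_sphere_zero hR hz), mul_assoc]

theorem hasSum_circleIntegral_mul_tsum_zpow {ι : Type*} [Countable ι] {φ : ℂ → ℂ} {R : ℝ}
    (hR : 0 < R) (hφ : CircleIntegrable φ 0 R) {a : ι → ℂ} {n : ι → ℤ}
    (ha : Summable fun i => ‖a i‖ * R ^ n i) :
    HasSum (fun i => a i * ∮ z in C(0, R), φ z * z ^ n i)
      (∮ z in C(0, R), φ z * ∑' i, a i * z ^ n i) := by
  simp only [← circleIntegral.integral_const_mul]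
  refine intervalIntegral.hasSum_integral_of_dominated_convergence
    (fun i θ => R * ‖φ (circleMap 0 R θ)‖ * (‖a i‖ * R ^ n i)) (fun i => ?_) (fun i => ?_)
    (.of_forall fun _ _ => ha.mul_left _) ?_ (.of_forall fun θ _ => ?_)
  · have hpow : Continuous fun θ => circleMap 0 R θ ^ n i :=
      (continuous_circleMap 0 R).zpow₀ _ fun _ => Or.inl (circleMap_ne_center hR.ne')
    simp only [deriv_circleMap]
    exact ((continuous_circleMap 0 R).mul continuous_const).aestronglyMeasurable.smul
      (MeasureTheory.aestronglyMeasurable_const.mul (hφ.def'.1.mul hpow.aestronglyMeasurable))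
  · refine .of_forall fun θ _ => le_of_eq ?_
    simp only [deriv_circleMap, smul_eq_mul, norm_mul, norm_I, norm_circleMap_zero,
      abs_of_pos hR, norm_zpow]
    ring
  · simpa only [tsum_mul_left] using (hφ.norm.const_mul R).mul_continuousOn continuousOn_const
  · have hz := circleMap_mem_sphere 0 hR.le θ
    have hs : Summable fun i => a i * circleMap 0 R θ ^ n i :=
      .of_norm <| ha.congr fun i => by rw [norm_mul, norm_zpow_of_mem_sphere_zero hz]
    simpa only [smul_eq_mul, mul_left_comm (a _)] using
      (hs.hasSum.mul_left (φ (circleMap 0 R θ))).mul_left (deriv (circleMap 0 R) θ)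

theorem hasSum_geometric_pow_add {K : Type*} [NormedField K] [CompleteSpace K] {w : K}
    (hw : ‖w‖ < 1) : HasSum (fun p : ℕ × ℕ => w ^ (p.1 + p.2)) (((1 - w) ^ 2)⁻¹) := by
  have hs : Summable fun n => ‖w ^ n‖ := by
    simpa only [norm_pow] using summable_geometric_of_lt_one (norm_nonneg w) hw
  simpa only [pow_add, sq, mul_inv] using
    (hasSum_geometric_of_norm_lt_one hw).mul (hasSum_geometric_of_norm_lt_one hw)
      (summable_mul_of_summable_norm hs hs)

theorem hasSum_inv_sub_sq {K : Type*} [NormedField K] [CompleteSpace K] {z w : K}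
    (h : ‖z‖ < ‖w‖) :
    HasSum (fun p : ℕ × ℕ => w ^ (-((p.1 + p.2 : ℕ) : ℤ) - 2) * z ^ ((p.1 + p.2 : ℕ) : ℤ))
      (((w - z) ^ 2)⁻¹) := by
  have hw : w ≠ 0 := norm_pos_iff.mp ((norm_nonneg z).trans_lt h)
  have hzw : ‖z / w‖ < 1 := by rwa [norm_div, div_lt_one (norm_pos_iff.mpr hw)]
  have key := (hasSum_geometric_pow_add hzw).mul_left ((w ^ 2)⁻¹)
  rw [← mul_inv, ← mul_pow, mul_sub, mul_one, mul_div_cancel₀ _ hw] at key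
  refine key.congr_fun fun p => ?_
  rw [zpow_sub₀ hw, zpow_neg, zpow_natCast, zpow_natCast, div_pow]
  field_simp

theorem summable_zpow_mul_zpow {r R : ℝ} (hr : 0 < r) (h : r < R) :
    Summable fun p : ℕ × ℕ => R ^ (-((p.1 + p.2 : ℕ) : ℤ) - 2) * r ^ ((p.1 + p.2 : ℕ) : ℤ) :=
  (hasSum_inv_sub_sq (by
    rwa [Real.norm_of_nonneg hr.le, Real.norm_of_nonneg (hr.trans h).le])).summable

namespace HasLaurentSeriesOnCircle

variable {f : ℂ → ℂ} {c : ℤ → ℂ} {R : ℝ}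

theorem continuousOn (hf : HasLaurentSeriesOnCircle f c R) (hR : 0 < R) :
    ContinuousOn f (sphere 0 R) := by
  refine (continuousOn_tsum (fun m => continuousOn_const.mul (continuousOn_zpow_sphere_zero hR m))
    hf.summable_norm fun m z hz => ?_).congr
      fun z hz => hf.eq_tsum z (mem_sphere_zero_iff_norm.mp hz)
  rw [Pi.mul_apply, norm_mul, norm_zpow_of_mem_sphere_zero hz]

theorem norm_coeff_le (hf : HasLaurentSeriesOnCircle f c R) (hR : 0 < R) (m : ℤ) :
    ‖c m‖ ≤ (∑' k, ‖c k‖ * R ^ k) * R ^ (-m) := by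
  rw [zpow_neg, ← div_eq_mul_inv, le_div_iff₀ (by positivity)]
  exact hf.summable_norm.le_tsum m fun k _ => by positivity

theorem circleIntegral_mul_zpow (hf : HasLaurentSeriesOnCircle f c R) (hR : 0 < R) (n : ℤ) :
    ∮ z in C(0, R), f z * z ^ n = 2 * π * I * c (-1 - n) := by
  have hseries : ∮ z in C(0, R), f z * z ^ n = ∮ z in C(0, R), z ^ n * ∑' m, c m * z ^ m :=
    circleIntegral.integral_congr hR.le fun z hz => by
      rw [hf.eq_tsum z (mem_sphere_zero_iff_norm.mp hz), mul_comm]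
  have hterm : ∀ m, ∮ z in C(0, R), z ^ n * z ^ m = if m = -1 - n then 2 * π * I else 0 := by
    intro m
    rw [circleIntegral.integral_congr hR.le fun z hz =>
      (zpow_add₀ (ne_zero_of_mem_sphere_zero hR hz) n m).symm, circleIntegral_zpow hR.ne']
    exact if_congr (by omega) rfl rfl
  have hsum := hasSum_circleIntegral_mul_tsum_zpow hR
    ((continuousOn_zpow_sphere_zero hR n).circleIntegrable hR.le) hf.summable_norm
  simp only [hterm, mul_ite, mul_zero] at hsum
  rw [hseries, ← hsum.tsum_eq, tsum_eq_single (-1 - n) fun m hm => if_neg hm, if_pos rfl,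
    mul_comm]

theorem circleIntegral_mul_zpow_mul_tsum (hf : HasLaurentSeriesOnCircle f c R) (hR : 0 < R)
    (t : ℤ) {ι : Type*} [Countable ι] {a : ι → ℂ} {n : ι → ℤ}
    (ha : Summable fun i => ‖a i‖ * R ^ n i) :
    ∮ z in C(0, R), f z * z ^ t * ∑' i, a i * z ^ n i =
      2 * π * I * ∑' i, a i * c (-1 - (t + n i)) := by
  have hsum := hasSum_circleIntegral_mul_tsum_zpow (φ := fun z => f z * z ^ t) hR
    (((hf.continuousOn hR).mul (continuousOn_zpow_sphere_zero hR t)).circleIntegrable hR.le) ha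
  simp only [circleIntegral_mul_zpow_mul_zpow _ hR, hf.circleIntegral_mul_zpow hR] at hsum
  rw [← hsum.tsum_eq, ← tsum_mul_left]
  exact tsum_congr fun i => by ring

theorem circleIntegral_mul_zpow_div_sub_sq (hf : HasLaurentSeriesOnCircle f c R) (hR : 0 < R)
    {w : ℂ} (hw : R < ‖w‖) (t : ℤ) :
    ∮ z in C(0, R), f z * z ^ t / (w - z) ^ 2 =
      2 * π * I * ∑' p : ℕ × ℕ,
        c (-1 - (t + ((p.1 + p.2 : ℕ) : ℤ))) * w ^ (-((p.1 + p.2 : ℕ) : ℤ) - 2) := by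
  have hexpand : ∮ z in C(0, R), f z * z ^ t / (w - z) ^ 2 =
      ∮ z in C(0, R), f z * z ^ t * ∑' p : ℕ × ℕ,
        w ^ (-((p.1 + p.2 : ℕ) : ℤ) - 2) * z ^ ((p.1 + p.2 : ℕ) : ℤ) :=
    circleIntegral.integral_congr hR.le fun z hz => by
      rw [(hasSum_inv_sub_sq (by rwa [mem_sphere_zero_iff_norm.mp hz])).tsum_eq, div_eq_mul_inv]
  rw [hexpand, hf.circleIntegral_mul_zpow_mul_tsum hR t
    ((summable_zpow_mul_zpow hR hw).congr fun p => by rw [norm_zpow])]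
  exact congrArg _ (tsum_congr fun p => mul_comm _ _)

theorem summable_norm_coeff_mul_zpow (hf : HasLaurentSeriesOnCircle f c R) (hR : 0 < R)
    {R' : ℝ} (hR' : R < R') (t : ℤ) :
    Summable fun p : ℕ × ℕ =>
      ‖c (-1 - (t + ((p.1 + p.2 : ℕ) : ℤ)))‖ * R' ^ (-((p.1 + p.2 : ℕ) : ℤ) - 2) := by
  have hR'pow (n : ℤ) : 0 ≤ R' ^ n := zpow_nonneg (hR.trans hR').le n
  refine Summable.of_nonneg_of_le (fun p => mul_nonneg (norm_nonneg _) (hR'pow _)) (fun p => ?_)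
    ((summable_zpow_mul_zpow hR hR').mul_left ((∑' m, ‖c m‖ * R ^ m) * R ^ (1 + t)))
  have hbound := hf.norm_coeff_le hR (-1 - (t + ((p.1 + p.2 : ℕ) : ℤ)))
  rw [show -(-1 - (t + ((p.1 + p.2 : ℕ) : ℤ))) = 1 + t + ((p.1 + p.2 : ℕ) : ℤ) by ring,
    zpow_add₀ hR.ne'] at hbound
  calc ‖c (-1 - (t + ((p.1 + p.2 : ℕ) : ℤ)))‖ * R' ^ (-((p.1 + p.2 : ℕ) : ℤ) - 2)
      ≤ (∑' m, ‖c m‖ * R ^ m) * (R ^ (1 + t) * R ^ ((p.1 + p.2 : ℕ) : ℤ)) *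
          R' ^ (-((p.1 + p.2 : ℕ) : ℤ) - 2) := mul_le_mul_of_nonneg_right hbound (hR'pow _)
    _ = _ := by ring

end HasLaurentSeriesOnCircle

/-- Trace formula by contour integrals: with `f, g` given by absolutely
convergent Laurent series on `|z| = R₁`, `|z| = R₂` (`R₂ < R₁`), the trace of
the operator on `ℓ²({h, h+1, …})` with entries `A(i,j) = ∑_{k≥1} f_{i+k} g_{-k-j}`
equals `-(1/4π²) ∮∮ f(z₁) g(z₂) z₁^{-h} z₂^{h} / (z₁ - z₂)² dz₁ dz₂`. -/
theorem stmt_11 (f g : ℂ → ℂ) (fc gc : ℤ → ℂ) (R₁ R₂ : ℝ)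
    (hR₂ : 0 < R₂) (hR : R₂ < R₁)
    (hfs : Summable fun m : ℤ => ‖fc m‖ * R₁ ^ m)
    (hgs : Summable fun m : ℤ => ‖gc m‖ * R₂ ^ m)
    (hf : ∀ z : ℂ, ‖z‖ = R₁ → f z = ∑' m : ℤ, fc m * z ^ m)
    (hg : ∀ z : ℂ, ‖z‖ = R₂ → g z = ∑' m : ℤ, gc m * z ^ m)
    (h : ℤ)
    (A : ℤ → ℤ → ℂ)
    (hA : ∀ i j : ℤ, A i j = ∑' k : ℕ, fc (i + (k + 1)) * gc (-(k + 1) - j))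
    (htr : Summable fun p : ℕ × ℕ =>
      ‖fc ((h + p.1) + (p.2 + 1))‖ * ‖gc (-(p.2 + 1) - (h + p.1))‖) :
    ∑' i : ℕ, A (h + i) (h + i) =
      -(4 * (Real.pi : ℂ) ^ 2)⁻¹ *
        ∫ θ₁ in (0 : ℝ)..(2 * Real.pi), ∫ θ₂ in (0 : ℝ)..(2 * Real.pi),
          (f ((R₁ : ℂ) * Complex.exp (I * θ₁)) * g ((R₂ : ℂ) * Complex.exp (I * θ₂)) *
              ((R₁ : ℂ) * Complex.exp (I * θ₁)) ^ (-h) *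
              ((R₂ : ℂ) * Complex.exp (I * θ₂)) ^ h /
              ((R₁ : ℂ) * Complex.exp (I * θ₁) - (R₂ : ℂ) * Complex.exp (I * θ₂)) ^ 2) *
            (I * ((R₁ : ℂ) * Complex.exp (I * θ₁))) * (I * ((R₂ : ℂ) * Complex.exp (I * θ₂))) := by
  have hR₁ : 0 < R₁ := hR₂.trans hR
  have hF : HasLaurentSeriesOnCircle f fc R₁ := ⟨hfs, hf⟩
  have hG : HasLaurentSeriesOnCircle g gc R₂ := ⟨hgs, hg⟩
  have inner : ∀ z₁ ∈ sphere (0 : ℂ) R₁,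
      ∮ z₂ in C(0, R₂), f z₁ * g z₂ * z₁ ^ (-h) * z₂ ^ h / (z₁ - z₂) ^ 2 =
        2 * π * I * (f z₁ * z₁ ^ (-h) * ∑' p : ℕ × ℕ,
          gc (-1 - (h + ((p.1 + p.2 : ℕ) : ℤ))) * z₁ ^ (-((p.1 + p.2 : ℕ) : ℤ) - 2)) := by
    intro z₁ hz₁
    rw [mul_left_comm (2 * π * I), ← hG.circleIntegral_mul_zpow_div_sub_sq hR₂
      (by rwa [mem_sphere_zero_iff_norm.mp hz₁]), ← circleIntegral.integral_const_mul]
    congr 1 with z₂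
    ring
  have trace : ∑' i : ℕ, A (h + i) (h + i) =
      ∑' p : ℕ × ℕ, fc (h + p.1 + (p.2 + 1)) * gc (-(p.2 + 1) - (h + p.1)) := by
    simp_rw [hA]
    exact (Summable.of_norm (htr.congr fun p => (norm_mul _ _).symm)).tsum_prod.symm
  rw [intervalIntegral_eq_circleIntegral₂
      (fun z₁ z₂ => f z₁ * g z₂ * z₁ ^ (-h) * z₂ ^ h / (z₁ - z₂) ^ 2),
    circleIntegral.integral_congr hR₁.le inner, circleIntegral.integral_const_mul,
    hF.circleIntegral_mul_zpow_mul_tsum hR₁ (-h) (hG.summable_norm_coeff_mul_zpow hR₂ hR h),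
    trace, ← tsum_mul_left, ← tsum_mul_left, ← tsum_mul_left]
  refine tsum_congr fun p => ?_
  rw [show -1 - (-h + (-((p.1 + p.2 : ℕ) : ℤ) - 2)) = h + p.1 + (p.2 + 1) by push_cast; ring,
    show -1 - (h + ((p.1 + p.2 : ℕ) : ℤ)) = -(p.2 + 1) - (h + p.1) by push_cast; ring]
  generalize fc _ = x
  generalize gc _ = y
  field_simp
  linear_combination (4 * x * y) * I_sq
end

section
/- Let α, r > 0 with αr < 1 and let c = ((1-α)r + 2√(αr))/(1+r). Then there exist constants δ > 0 and η > 0 such that for all c' ∈ (c - η, c), the imaginary part of u⁺_{c'} (the critical point in the upper half-plane) satisfies Im(u⁺_{c'}) ≥ δ·(c - c')^{1/2}. -/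
open Complex

/-- Lower bound for the imaginary part of the upper critical point: with
`c = ((1-α)r + 2√(αr))/(1+r)`, there are `δ, η > 0` such that for all
`c' ∈ (c - η, c)`, the critical point in the upper half-plane
`u⁺_{c'} = (-(1-r)c' - (1-α)r + i√(4αr - ((1+r)c' + (α-1)r)²)) / (2(α + c'))`
satisfies `Im u⁺_{c'} ≥ δ (c - c')^{1/2}`. -/
theorem stmt_15 (α r : ℝ) (hα : 0 < α) (hr : 0 < r) (har : α * r < 1)
    (c : ℝ) (hc : c = ((1 - α) * r + 2 * Real.sqrt (α * r)) / (1 + r)) :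
    ∃ δ > 0, ∃ η > 0, ∀ c' : ℝ, c - η < c' → c' < c →
      δ * Real.sqrt (c - c') ≤
        (((-(((1 - r) * c' + (1 - α) * r : ℝ) : ℂ) +
            Complex.I * (Real.sqrt (4 * (α * r) - ((1 + r) * c' + (α - 1) * r) ^ 2) : ℝ)) /
          (2 * ((α : ℂ) + (c' : ℂ)))).im) := by
  have har0 : 0 < α * r := mul_pos hα hr
  set S := Real.sqrt (α * r) with hS
  have hS0 : 0 < S := Real.sqrt_pos.2 har0
  have hS2 : S ^ 2 = α * r := Real.sq_sqrt har0.le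
  have h1r : (0:ℝ) < 1 + r := by linarith
  have hac : 0 < α + c := by
    have : α + c = (α + r + 2 * S) / (1 + r) := by
      rw [hc]; field_simp; ring
    rw [this]
    positivity
  have hcc : (1 + r) * c = (1 - α) * r + 2 * S := by
    rw [hc]; field_simp
  set η := min ((α + c) / 2) (2 * S / (1 + r)) with hη
  have hη0 : 0 < η := lt_min (by positivity) (by positivity)
  refine ⟨Real.sqrt (2 * S * (1 + r)) / (2 * (α + c)), by positivity, η, hη0, ?_⟩
  intro c' h1 h2
  set t := c - c' with ht
  have ht0 : 0 < t := by simp [ht]; linarith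
  have htη : t < η := by simp [ht]; linarith
  have hac' : 0 < α + c' := by
    have : η ≤ (α + c) / 2 := min_le_left _ _
    have : c - (α + c) / 2 < c' := by linarith
    linarith
  have hQ : (1 + r) * c' + (α - 1) * r = 2 * S - (1 + r) * t := by
    have : c' = c - t := by simp [ht]
    rw [this]; nlinarith [hcc]
  have hfac : 4 * (α * r) - ((1 + r) * c' + (α - 1) * r) ^ 2
      = (1 + r) * t * (4 * S - (1 + r) * t) := by
    rw [hQ]; nlinarith [hS2]
  have hsmall : (1 + r) * t ≤ 2 * S := by
    have h2 : η ≤ 2 * S / (1 + r) := min_le_right _ _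
    have : t ≤ 2 * S / (1 + r) := le_trans htη.le h2
    calc (1 + r) * t ≤ (1 + r) * (2 * S / (1 + r)) := by
          exact mul_le_mul_of_nonneg_left this h1r.le
      _ = 2 * S := by field_simp
  have hlow : 2 * S * (1 + r) * t ≤ 4 * (α * r) - ((1 + r) * c' + (α - 1) * r) ^ 2 := by
    rw [hfac]
    nlinarith [mul_nonneg (by positivity : (0:ℝ) ≤ (1 + r) * t)
      (by linarith : (0:ℝ) ≤ 2 * S - (1 + r) * t)]
  -- compute the imaginary part
  have him : ((-(((1 - r) * c' + (1 - α) * r : ℝ) : ℂ) +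
            Complex.I * (Real.sqrt (4 * (α * r) - ((1 + r) * c' + (α - 1) * r) ^ 2) : ℝ)) /
          (2 * ((α : ℂ) + (c' : ℂ)))).im
      = Real.sqrt (4 * (α * r) - ((1 + r) * c' + (α - 1) * r) ^ 2) / (2 * (α + c')) := by
    have hden : (2 * ((α : ℂ) + (c' : ℂ))) = ((2 * (α + c') : ℝ) : ℂ) := by
      push_cast; ring
    rw [hden, Complex.div_ofReal_im]
    simp
  rw [him]
  have hs1 : Real.sqrt (2 * S * (1 + r)) * Real.sqrt t
      ≤ Real.sqrt (4 * (α * r) - ((1 + r) * c' + (α - 1) * r) ^ 2) := by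
    rw [← Real.sqrt_mul (by positivity)]
    exact Real.sqrt_le_sqrt hlow
  calc Real.sqrt (2 * S * (1 + r)) / (2 * (α + c)) * Real.sqrt (c - c')
      = Real.sqrt (2 * S * (1 + r)) * Real.sqrt t / (2 * (α + c)) := by
        rw [← ht]; ring
    _ ≤ Real.sqrt (4 * (α * r) - ((1 + r) * c' + (α - 1) * r) ^ 2) / (2 * (α + c')) := by
        apply div_le_div₀ (Real.sqrt_nonneg _) hs1 (by positivity)
        linarith
end
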